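/- Let V = F_3^5 with quadratic form q(a) = a_0^2 - a_1^2 - ... - a_4^2 and a_0,...,a_4 an orthogonal basis with q(a_0) = 1 and q(a_i) = -1 for i ≥ 1. If D : V → C changes sign under the reflection in each a_i (i.e. D(R_i(α)) = -D(α) for all α, where R_i is the orthogonal reflection in a_i), then D is determined up to a complex scalar; equivalently, the space of such functions D is at most one-dimensional. -/

import Mathlib

abbrev V : Type := Fin 5 → ZMod 3

def q (a : V) : ZMod 3 := a 0 ^ 2 - a 1 ^ 2 - a 2 ^ 2 - a 3 ^ 2 - a 4 ^ 2

def b (x y : V) : ZMod 3 := x 0 * y 0 - x 1 * y 1 - x 2 * y 2 - x 3 * y 3 - x 4 * y 4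

def reflIn (a v : V) : V := v - (2 * b a v / b a a) • a

/-!
In the coordinates `x` of the orthogonal basis `a`, the reflection in `a i` negates `x i`
and fixes the other coordinates, so `D` becomes a function on `F₃⁵` that is odd in each
coordinate. Oddness in `x i` forces the value to vanish when `x i = 0` and to change sign
with `x i ∈ {1, -1}`. Hence `D (∑ j, x j • a j)` is `D (∑ j, a j)` times the product of the
signs of the `x j`, so `D` is determined by a single value.
-/

open Finset Function

def OddInEachCoord {ι R G : Type*} [DecidableEq ι] [Neg R] [Neg G] (f : (ι → R) → G) :
    Prop :=
  ∀ i x, f (update x i (-x i)) = -f x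

-- On `ZMod 3` the quadratic character is the sign: `0 ↦ 0`, `1 ↦ 1`, `-1 ↦ -1`.
local notation "χ" => quadraticChar (ZMod 3)

lemma quadraticChar_zmod_three_neg_one : χ (-1) = -1 := by decide

section OddInEachCoord

variable {ι G : Type*} [DecidableEq ι] [AddCommGroup G] [IsAddTorsionFree G]
  {f : (ι → ZMod 3) → G}

lemma OddInEachCoord.apply_eq_zsmul_update_one (hf : OddInEachCoord f) (i : ι)
    (x : ι → ZMod 3) : f x = χ (x i) • f (update x i 1) := by
  have hodd := hf i x
  have trichotomy : ∀ z : ZMod 3, z = 0 ∨ z = 1 ∨ z = -1 := by decide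
  obtain h | h | h := trichotomy (x i)
  · rw [h, neg_zero, ← h, update_eq_self, self_eq_neg] at hodd
    rw [hodd, h, quadraticChar_zero, zero_smul]
  · rw [show update x i 1 = x from h ▸ update_eq_self i x, h, map_one, one_smul]
  · rw [h, neg_neg] at hodd
    rw [h, quadraticChar_zmod_three_neg_one, hodd, neg_smul, one_smul, neg_neg]

lemma OddInEachCoord.apply_eq_prod_zsmul [Fintype ι] (hf : OddInEachCoord f)
    (x : ι → ZMod 3) : f x = (∏ j, χ (x j)) • f 1 := by
  suffices ∀ s : Finset ι, ∀ x : ι → ZMod 3, (∀ j ∉ s, x j = 1) →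
      f x = (∏ j ∈ s, χ (x j)) • f 1 from this univ x (by simp)
  intro s
  induction s using Finset.induction_on with
  | empty =>
    intro x hx
    rw [prod_empty, one_smul, show x = 1 from funext fun j => hx j (notMem_empty j)]
  | insert i s hi ih =>
    intro x hx
    have hy : ∀ j ∉ s, update x i 1 j = 1 := fun j hj => by
      rcases eq_or_ne j i with rfl | hji
      · exact update_self ..
      · rw [update_of_ne hji]; exact hx j (by simp [hji, hj])
    rw [hf.apply_eq_zsmul_update_one i, ih _ hy, prod_insert hi, mul_smul]
    congr 2
    refine prod_congr rfl fun j hj => ?_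
    rw [update_of_ne (ne_of_mem_of_not_mem hj hi)]

lemma OddInEachCoord.exists_eq_smul_or_eq_smul [Fintype ι] {K : Type*} [Field K]
    [IsAddTorsionFree K]
    {f g : (ι → ZMod 3) → K} (hf : OddInEachCoord f) (hg : OddInEachCoord g) :
    ∃ c : K, f = c • g ∨ g = c • f := by
  by_cases hg1 : g 1 = 0
  · exact ⟨0, .inr <| funext fun x => by simp [hg.apply_eq_prod_zsmul x, hg1]⟩
  · refine ⟨f 1 / g 1, .inl <| funext fun x => ?_⟩
    rw [Pi.smul_apply, hf.apply_eq_prod_zsmul x, hg.apply_eq_prod_zsmul x, smul_eq_mul,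
      zsmul_eq_mul, zsmul_eq_mul]
    field_simp

end OddInEachCoord

lemma b_self (u : V) : b u u = q u := by
  simp only [b, q]; ring

section OrthogonalFamily

variable {ι : Type*} [Fintype ι] {a : ι → V}

lemma b_linearCombination_right (u : V) (x : ι → ZMod 3) :
    b u (Fintype.linearCombination (ZMod 3) a x) = ∑ j, x j * b u (a j) := by
  simp only [b, Fintype.linearCombination_apply, Finset.sum_apply, Pi.smul_apply, smul_eq_mul,
    Finset.mul_sum, ← Finset.sum_sub_distrib]
  exact sum_congr rfl fun j _ => by ring

lemma b_linearCombination_of_pairwise (horth : Pairwise fun i j => b (a i) (a j) = 0) (i : ι)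
    (x : ι → ZMod 3) :
    b (a i) (Fintype.linearCombination (ZMod 3) a x) = x i * b (a i) (a i) := by
  rw [b_linearCombination_right, sum_eq_single i (fun j _ hji => by rw [horth hji.symm, mul_zero])
    (by simp)]

lemma reflIn_linearCombination [DecidableEq ι] (horth : Pairwise fun i j => b (a i) (a j) = 0)
    {i : ι} (hi : b (a i) (a i) ≠ 0) (x : ι → ZMod 3) :
    reflIn (a i) (Fintype.linearCombination (ZMod 3) a x)
      = Fintype.linearCombination (ZMod 3) a (update x i (-x i)) := by
  have hx : update x i (-x i) = x - Pi.single i (2 * x i) := by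
    ext j
    rcases eq_or_ne j i with rfl | hji
    · simp only [update_self, Pi.sub_apply, Pi.single_eq_same]; ring
    · simp [hji]
  rw [hx, map_sub, Fintype.linearCombination_apply_single, reflIn,
    b_linearCombination_of_pairwise horth, mul_div_assoc, mul_div_cancel_right₀ _ hi]

lemma injective_linearCombination_of_pairwise (horth : Pairwise fun i j => b (a i) (a j) = 0)
    (hne : ∀ i, b (a i) (a i) ≠ 0) : Injective (Fintype.linearCombination (ZMod 3) a) :=
  fun x y hxy => funext fun i => mul_right_cancel₀ (hne i) <| by
    rw [← b_linearCombination_of_pairwise horth, hxy, b_linearCombination_of_pairwise horth]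

end OrthogonalFamily

theorem stmt11 (a : Fin 5 → V)
    (horth : ∀ i j, i ≠ j → b (a i) (a j) = 0)
    (h0 : q (a 0) = 1) (hs : ∀ i, i ≠ 0 → q (a i) = -1)
    (D E : V → ℂ)
    (hD : ∀ i v, D (reflIn (a i) v) = - D v)
    (hE : ∀ i v, E (reflIn (a i) v) = - E v) :
    ∃ c : ℂ, D = c • E ∨ E = c • D := by
  have hne : ∀ i, b (a i) (a i) ≠ 0 := fun i => by
    rw [b_self]
    rcases eq_or_ne i 0 with rfl | hi
    · rw [h0]; decide
    · rw [hs i hi]; decide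
  set L := Fintype.linearCombination (ZMod 3) a
  have hL : Surjective L :=
    Finite.injective_iff_surjective.mp (injective_linearCombination_of_pairwise horth hne)
  have hodd (F : V → ℂ) (hF : ∀ i v, F (reflIn (a i) v) = -F v) : OddInEachCoord (F ∘ L) :=
    fun i x => (congrArg F (reflIn_linearCombination horth (hne i) x)).symm.trans (hF i _)
  obtain ⟨c, hc | hc⟩ := (hodd D hD).exists_eq_smul_or_eq_smul (hodd E hE)
  exacts [⟨c, .inl (hL.injective_comp_right hc)⟩, ⟨c, .inr (hL.injective_comp_right hc)⟩]
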